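/- arXiv:math/0304152 — 4 statements merged into one kernel-verified Lean document; each statement's English description precedes it below -/
import Mathlib

section
/- Let $I \subseteq (0,1]$ and let $I_+$ denote the set of all finite sums of elements of $I$ that are less than one. Define $D(I) = \{ a \leq 1 : a = \frac{m-1}{m} + \frac{f}{m} \text{ for some } m \in \mathbb{N}_{\geq 1}, f \in I_+ \}$. Then $D(I)_+ = D(I)$, i.e., every finite sum of elements of $D(I)$ that is less than one is itself an element of $D(I)$. -/
/-- `Iplus I` : the set of all finite (nonempty) sums of elements of `I`
that are less than one. -/
def Iplus (I : Set ℝ) : Set ℝ :=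
  {x | ∃ l : List ℝ, l ≠ [] ∧ (∀ y ∈ l, y ∈ I) ∧ l.sum = x ∧ x < 1}

/-- `DD I` : the set of `a ≤ 1` of the form `(m-1)/m + f/m` with `m` a
positive integer and `f ∈ Iplus I`. -/
def DD (I : Set ℝ) : Set ℝ :=
  {a | a ≤ 1 ∧ ∃ m : ℕ, 0 < m ∧ ∃ f ∈ Iplus I, a = ((m : ℝ) - 1) / m + f / m}

/-- A set of reals satisfies DCC if it contains no infinite strictly
decreasing sequence. -/
def DCC (S : Set ℝ) : Prop := ¬ ∃ f : ℕ → ℝ, (∀ n, f n ∈ S) ∧ StrictAnti f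

/-- A set of reals satisfies ACC if it contains no infinite strictly
increasing sequence. -/
def ACC (S : Set ℝ) : Prop := ¬ ∃ f : ℕ → ℝ, (∀ n, f n ∈ S) ∧ StrictMono f

/-!
Elements of `D(I)` are positive, and one written with `m ≥ 2` is at least `1/2`. Hence of two
elements of `D(I)` with sum below one, the smaller is written with `m = 1`, i.e. it is some
`g ∈ I₊`. Adding `g` to `(m-1)/m + f/m` gives `(m-1)/m + (f + m g)/m`, and `f + m g ∈ I₊`.
Closure under sums of two elements then gives closure under all finite sums, because the partial
sums of positive numbers stay below the total.
-/

section Iplus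

variable {S : Set ℝ}

lemma subset_Iplus (hS : S ⊆ Set.Iio 1) : S ⊆ Iplus S :=
  fun x hx => ⟨[x], List.cons_ne_nil _ _, by simpa using hx, List.sum_singleton, hS hx⟩

lemma Iplus_subset_of_add_mem (hS : S ⊆ Set.Ioi 0)
    (hadd : ∀ a ∈ S, ∀ b ∈ S, a + b < 1 → a + b ∈ S) : Iplus S ⊆ S := by
  rintro _ ⟨l, hne, hmem, rfl, hlt⟩
  induction l with
  | nil => contradiction
  | cons a t ih =>
    rcases eq_or_ne t [] with rfl | ht
    · simpa using hmem a List.mem_cons_self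
    · simp only [List.mem_cons, forall_eq_or_imp, List.sum_cons] at hmem hlt ⊢
      have ha : 0 < a := hS hmem.1
      exact hadd a hmem.1 t.sum (ih ht hmem.2 (by linarith)) hlt

lemma lt_one_of_mem_Iplus {x : ℝ} (hx : x ∈ Iplus S) : x < 1 := by
  obtain ⟨-, -, -, -, h⟩ := hx
  exact h

lemma pos_of_mem_Iplus (hS : S ⊆ Set.Ioi 0) {x : ℝ} (hx : x ∈ Iplus S) : 0 < x := by
  obtain ⟨l, hne, hmem, rfl, -⟩ := hx
  exact List.sum_pos l (fun y hy => hS (hmem y hy)) hne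

lemma add_mem_Iplus {f g : ℝ} (hf : f ∈ Iplus S) (hg : g ∈ Iplus S) (h : f + g < 1) :
    f + g ∈ Iplus S := by
  obtain ⟨lf, hne, hmf, rfl, -⟩ := hf
  obtain ⟨lg, -, hmg, rfl, -⟩ := hg
  refine ⟨lf ++ lg, by simp [hne], fun y hy => ?_, List.sum_append, h⟩
  rcases List.mem_append.mp hy with hy | hy
  exacts [hmf y hy, hmg y hy]

lemma add_nat_mul_mem_Iplus (hS : S ⊆ Set.Ioi 0) {f g : ℝ} (hf : f ∈ Iplus S)
    (hg : g ∈ Iplus S) (m : ℕ) (h : f + m * g < 1) : f + m * g ∈ Iplus S := by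
  induction m with
  | zero => simpa using hf
  | succ m ih =>
    have hg0 := pos_of_mem_Iplus hS hg
    have hsplit : f + (m + 1 : ℕ) * g = f + m * g + g := by push_cast; ring
    rw [hsplit] at h ⊢
    exact add_mem_Iplus (ih (by linarith)) hg h

end Iplus

section DD

variable {I : Set ℝ} {a b g : ℝ}

lemma lt_one_of_mem_DD (ha : a ∈ DD I) : a < 1 := by
  obtain ⟨-, m, hm, f, hf, rfl⟩ := ha
  have hm0 : (0 : ℝ) < m := by exact_mod_cast hm
  rw [← add_div, div_lt_one hm0]
  linarith [lt_one_of_mem_Iplus hf]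

variable (hI : I ⊆ Set.Ioi 0)
include hI

lemma pos_of_mem_DD (ha : a ∈ DD I) : 0 < a := by
  obtain ⟨-, m, hm, f, hf, rfl⟩ := ha
  have hm1 : (1 : ℝ) ≤ m := by exact_mod_cast hm
  rw [← add_div]
  exact div_pos (by linarith [pos_of_mem_Iplus hI hf]) (by linarith)

lemma mem_Iplus_of_mem_DD_of_lt_half (ha : a ∈ DD I) (h : a < 1 / 2) : a ∈ Iplus I := by
  obtain ⟨-, m, hm, f, hf, rfl⟩ := ha
  obtain rfl | hm2 : m = 1 ∨ 2 ≤ m := by omega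
  · simpa using hf
  · have hm2' : (2 : ℝ) ≤ m := by exact_mod_cast hm2
    rw [← add_div, div_lt_iff₀ (by linarith)] at h
    linarith [pos_of_mem_Iplus hI hf]

lemma add_mem_DD_of_mem_Iplus (ha : a ∈ DD I) (hg : g ∈ Iplus I) (h : a + g < 1) :
    a + g ∈ DD I := by
  obtain ⟨-, m, hm, f, hf, rfl⟩ := ha
  have hm0 : (0 : ℝ) < m := by exact_mod_cast hm
  have hfg : f + m * g < 1 := by
    have h' := h
    rw [← add_div, div_add' _ _ _ hm0.ne', div_lt_one hm0] at h'
    linarith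
  refine ⟨h.le, m, hm, f + m * g, add_nat_mul_mem_Iplus hI hf hg m hfg, ?_⟩
  field_simp
  ring

lemma add_mem_DD (ha : a ∈ DD I) (hb : b ∈ DD I) (h : a + b < 1) : a + b ∈ DD I := by
  wlog hab : a ≤ b generalizing a b
  · rw [add_comm] at h ⊢
    exact this hb ha h (le_of_not_ge hab)
  rw [add_comm]
  exact add_mem_DD_of_mem_Iplus hI hb
    (mem_Iplus_of_mem_DD_of_lt_half hI ha (by linarith)) (by linarith)

end DD

/-- Lemma 4.4(1): `D(I)_+ = D(I)`. -/
theorem Iplus_DD_eq (I : Set ℝ) (hI : I ⊆ Set.Ioc 0 1) :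
    Iplus (DD I) = DD I := by
  have hpos : I ⊆ Set.Ioi 0 := hI.trans Set.Ioc_subset_Ioi_self
  exact (Iplus_subset_of_add_mem (fun _ => pos_of_mem_DD hpos)
    (fun _ ha _ hb => add_mem_DD hpos ha hb)).antisymm (subset_Iplus fun _ => lt_one_of_mem_DD)
end

section
/- Let $I \subseteq (0,1]$. If $I$ satisfies the descending chain condition, then the set $I_+$ of finite sums of elements of $I$ less than one also satisfies the descending chain condition. -/
lemma dcc_iff_isWF (S : Set ℝ) : DCC S ↔ S.IsWF := by
  rw [Set.isWF_iff_no_descending_seq, DCC]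
  constructor
  · intro h f hf hm; exact h ⟨f, hm, hf⟩
  · rintro h ⟨f, hm, hf⟩; exact h f hf hm

/-- sums of lists of length `k` from `I`. -/
def sumsOf (I : Set ℝ) (k : ℕ) : Set ℝ :=
  {x | ∃ l : List ℝ, l.length = k ∧ (∀ y ∈ l, y ∈ I) ∧ l.sum = x}

lemma isWF_sumsOf {I : Set ℝ} (hI : I.IsWF) : ∀ k, (sumsOf I (k + 1)).IsWF := by
  intro k
  induction k with
  | zero =>
    refine hI.mono ?_
    rintro x ⟨l, hl, hmem, hsum⟩
    obtain ⟨y, rfl⟩ := List.length_eq_one_iff.mp hl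
    simp only [List.sum_cons, List.sum_nil, add_zero] at hsum
    exact hsum ▸ hmem y (by simp)
  | succ k ih =>
    refine (hI.add ih).mono ?_
    rintro x ⟨l, hl, hmem, hsum⟩
    obtain ⟨y, t, rfl⟩ := List.exists_cons_of_ne_nil (by rintro rfl; simp at hl : l ≠ [])
    rw [Set.mem_add]
    refine ⟨y, hmem y (by simp), t.sum,
      ⟨t, by simp_all, fun z hz => hmem z (by simp [hz]), rfl⟩, ?_⟩
    simpa using hsum

lemma list_sum_lb : ∀ (l : List ℝ) (c : ℝ), (∀ y ∈ l, c ≤ y) → (l.length : ℝ) * c ≤ l.sum := by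
  intro l c h
  induction l with
  | nil => simp
  | cons y t ih =>
    have h1 : c ≤ y := h y (by simp)
    have h2 : (t.length : ℝ) * c ≤ t.sum := ih (fun z hz => h z (by simp [hz]))
    simp only [List.length_cons, List.sum_cons]
    push_cast
    linarith

lemma isWF_biUnion (A : ℕ → Set ℝ) (hA : ∀ k, (A k).IsWF) :
    ∀ n, (⋃ k < n, A k).IsWF := by
  intro n
  induction n with
  | zero => simpa using Set.isWF_empty
  | succ n ih => rw [Set.biUnion_lt_succ]; exact ih.union (hA n)

/-- If `I ⊆ (0,1]` satisfies DCC then so does `I_+`. -/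
theorem DCC_Iplus (I : Set ℝ) (hI : I ⊆ Set.Ioc 0 1) (h : DCC I) :
    DCC (Iplus I) := by
  rw [dcc_iff_isWF] at h ⊢
  rcases Set.eq_empty_or_nonempty I with hE | hne
  · refine Set.isWF_empty.mono ?_
    rintro x ⟨l, hl, hmem, -, -⟩
    rcases List.exists_mem_of_ne_nil l hl with ⟨y, hy⟩
    exact absurd (hmem y hy) (by simp [hE])
  · set m₀ := h.min hne with hm₀
    have hm₀mem : m₀ ∈ I := h.min_mem hne
    have hm₀pos : 0 < m₀ := (hI hm₀mem).1
    set N : ℕ := ⌈1 / m₀⌉₊ + 1 with hN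
    have hsub : Iplus I ⊆ ⋃ k < N, sumsOf I (k + 1) := by
      rintro x ⟨l, hl, hmem, hsum, hlt⟩
      have hlen : 1 ≤ l.length := List.length_pos_iff.2 hl
      have hlb : (l.length : ℝ) * m₀ ≤ l.sum :=
        list_sum_lb l m₀ (fun y hy => h.min_le hne (hmem y hy))
      have hlenlt : (l.length : ℝ) < 1 / m₀ := by
        rw [lt_div_iff₀ hm₀pos]
        exact lt_of_le_of_lt hlb (hsum ▸ hlt)
      have hlen_le : l.length < N := by
        have := Nat.lt_ceil.2 hlenlt
        omega
      simp only [Set.mem_iUnion]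
      exact ⟨l.length - 1, by omega, l, by omega, hmem, hsum⟩
    exact (isWF_biUnion _ (fun k => isWF_sumsOf h k) N).mono hsub
end

section
/- Suppose $I \subseteq \mathbb{R}_{>0}$ satisfies the descending chain condition and $K \subseteq \mathbb{R}$ satisfies the ascending chain condition, where both $I$ and $K$ are bounded. Then the set $X$ of all real numbers $c \in (0,1]$ such that there exist positive integers $m_1, \ldots, m_p$ and $k_1, \ldots, k_p$ (not all $k_i$ zero), elements $a \in I \cup \{0\}$ and $f_i \in I_+ \cup \{0\}$, and $k \in K$, with $a + \sum_{i=1}^p \left( \frac{m_i - 1}{m_i} + \frac{f_i}{m_i} + \frac{k_i c}{m_i} \right) = k$ and each summand $\frac{m_i-1}{m_i} + \frac{f_i}{m_i} + \frac{k_i c}{m_i} \leq 1$, satisfies the ascending chain condition. -/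
/-! Suppose `cₙ` is a strictly increasing sequence in the set, represented by `aₙ`, `κₙ` and the
list `lₙ` of triples `(mᵢ, fᵢ, kᵢ)`. The `aₙ` lie in a well-ordered set, the `κₙ` in a reverse
well-ordered one, and the `fᵢ` among finite sums of elements of `I`, which are again well-ordered.
By Dickson's and Higman's lemmas there are `n < n'` with `aₙ ≤ aₙ'`, `κₙ ≥ κₙ'` and `lₙ`
dominated componentwise by a sublist of `lₙ'`. A summand is monotone in the triple and in `c`,
strictly so in `c` when `k > 0`, hence `κₙ < κₙ'`, a contradiction. -/

open Set

noncomputable def summand (c : ℝ) (x : ℕ × ℝ × ℕ) : ℝ :=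
  ((x.1 : ℝ) - 1) / x.1 + x.2.1 / x.1 + (x.2.2 : ℝ) * c / x.1

lemma summand_eq {c : ℝ} {x : ℕ × ℝ × ℕ} (hm : 0 < x.1) :
    summand c x = 1 - (1 - x.2.1 - x.2.2 * c) / x.1 := by
  have : (x.1 : ℝ) ≠ 0 := by positivity
  simp only [summand]
  field_simp
  ring

lemma summand_nonneg {c : ℝ} {x : ℕ × ℝ × ℕ} (hm : 0 < x.1) (hf : 0 ≤ x.2.1) (hc : 0 ≤ c) :
    0 ≤ summand c x := by
  have hm' : (1 : ℝ) ≤ x.1 := by exact_mod_cast hm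
  unfold summand
  have hfirst := div_nonneg (sub_nonneg.2 hm') (zero_le_one.trans hm')
  positivity

/-- Writing `summand c x = 1 - u/m`, a larger triple lowers `u`, and `u ≥ 0` is exactly the
bound `summand ≤ 1`, so a larger denominator can only help. -/
lemma summand_add_le_summand {c c' : ℝ} {x y : ℕ × ℝ × ℕ} (hxy : x ≤ y) (hm : 0 < x.1)
    (hy : summand c' y ≤ 1) :
    summand c x + ((y.2.1 - x.2.1) + (y.2.2 * c' - x.2.2 * c)) / x.1 ≤ summand c' y := by
  have hm' : 0 < y.1 := hm.trans_le hxy.1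
  have hmm : (x.1 : ℝ) ≤ y.1 := by exact_mod_cast hxy.1
  rw [summand_eq hm'] at hy ⊢
  have hu : 0 ≤ 1 - y.2.1 - y.2.2 * c' := by
    by_contra! h
    have : (1 - y.2.1 - y.2.2 * c') / y.1 < 0 := div_neg_of_neg_of_pos h (by positivity)
    linarith
  have hdenom := div_le_div_of_nonneg_left hu (by positivity : (0 : ℝ) < x.1) hmm
  rw [summand_eq hm]
  have hx : (x.1 : ℝ) ≠ 0 := by positivity
  have key : 1 - (1 - x.2.1 - x.2.2 * c) / x.1 + (y.2.1 - x.2.1 + (y.2.2 * c' - x.2.2 * c)) / x.1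
      = 1 - (1 - y.2.1 - y.2.2 * c') / x.1 := by
    field_simp
    ring
  linarith

lemma summand_le_summand {c c' : ℝ} {x y : ℕ × ℝ × ℕ} (hxy : x ≤ y) (hm : 0 < x.1)
    (hc : 0 ≤ c) (hcc : c ≤ c') (hy : summand c' y ≤ 1) : summand c x ≤ summand c' y := by
  refine le_trans (le_add_of_nonneg_right (div_nonneg ?_ (Nat.cast_nonneg _)))
    (summand_add_le_summand hxy hm hy)
  have hk : (x.2.2 : ℝ) ≤ y.2.2 := by exact_mod_cast hxy.2.2
  have hf : x.2.1 ≤ y.2.1 := hxy.2.1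
  nlinarith

lemma summand_lt_summand {c c' : ℝ} {x y : ℕ × ℝ × ℕ} (hxy : x ≤ y) (hm : 0 < x.1)
    (hk : 0 < x.2.2) (hc : 0 ≤ c) (hcc : c < c') (hy : summand c' y ≤ 1) :
    summand c x < summand c' y := by
  refine lt_of_lt_of_le (lt_add_of_pos_right _ (div_pos ?_ (by exact_mod_cast hm)))
    (summand_add_le_summand hxy hm hy)
  have hk' : (1 : ℝ) ≤ x.2.2 := by exact_mod_cast hk
  have hkk : (x.2.2 : ℝ) ≤ y.2.2 := by exact_mod_cast hxy.2.2
  have hf : x.2.1 ≤ y.2.1 := hxy.2.1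
  nlinarith

namespace List.SublistForall₂

variable {α β M : Type*} [AddCommMonoid M] [PartialOrder M] [IsOrderedCancelAddMonoid M]
  {R : α → β → Prop} {g : α → M} {h : β → M} {l₁ : List α} {l₂ : List β}

lemma sum_map_le_sum_map (hl : SublistForall₂ R l₁ l₂)
    (hgh : ∀ x ∈ l₁, ∀ y ∈ l₂, R x y → g x ≤ h y) (hh : ∀ y ∈ l₂, 0 ≤ h y) :
    (l₁.map g).sum ≤ (l₂.map h).sum := by
  induction hl with
  | nil => exact List.sum_nonneg (by simpa using hh)
  | cons hab _ ih =>
    simp only [List.map_cons, List.sum_cons]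
    exact add_le_add (hgh _ mem_cons_self _ mem_cons_self hab)
      (ih (fun x hx y hy => hgh x (mem_cons_of_mem _ hx) y (mem_cons_of_mem _ hy))
        (fun y hy => hh y (mem_cons_of_mem _ hy)))
  | cons_right _ ih =>
    simp only [List.map_cons, List.sum_cons]
    exact le_add_of_nonneg_of_le (hh _ mem_cons_self)
      (ih (fun x hx y hy => hgh x hx y (mem_cons_of_mem _ hy))
        (fun y hy => hh y (mem_cons_of_mem _ hy)))

lemma sum_map_lt_sum_map (hl : SublistForall₂ R l₁ l₂)
    (hgh : ∀ x ∈ l₁, ∀ y ∈ l₂, R x y → g x ≤ h y) (hh : ∀ y ∈ l₂, 0 ≤ h y)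
    (hlt : ∃ x ∈ l₁, ∀ y ∈ l₂, R x y → g x < h y) :
    (l₁.map g).sum < (l₂.map h).sum := by
  induction hl with
  | nil => simp at hlt
  | cons hab hl ih =>
    have hgh' : ∀ x ∈ _, ∀ y ∈ _, R x y → g x ≤ h y :=
      fun x hx y hy => hgh x (mem_cons_of_mem _ hx) y (mem_cons_of_mem _ hy)
    have hh' : ∀ y ∈ _, 0 ≤ h y := fun y hy => hh y (mem_cons_of_mem _ hy)
    simp only [List.map_cons, List.sum_cons]
    obtain ⟨x, hx, hx_lt⟩ := hlt
    rcases mem_cons.1 hx with rfl | hx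
    · exact add_lt_add_of_lt_of_le (hx_lt _ mem_cons_self hab) (hl.sum_map_le_sum_map hgh' hh')
    · exact add_lt_add_of_le_of_lt (hgh _ mem_cons_self _ mem_cons_self hab)
        (ih hgh' hh' ⟨x, hx, fun y hy => hx_lt y (mem_cons_of_mem _ hy)⟩)
  | cons_right _ ih =>
    simp only [List.map_cons, List.sum_cons]
    obtain ⟨x, hx, hx_lt⟩ := hlt
    exact lt_add_of_nonneg_of_lt (hh _ mem_cons_self)
      (ih (fun x hx y hy => hgh x hx y (mem_cons_of_mem _ hy))
        (fun y hy => hh y (mem_cons_of_mem _ hy))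
        ⟨x, hx, fun y hy => hx_lt y (mem_cons_of_mem _ hy)⟩)

end List.SublistForall₂

lemma DCC.isPWO {S : Set ℝ} (h : DCC S) : S.IsPWO :=
  (isWF_iff_no_descending_seq.2 fun f hf hS => h ⟨f, hS, hf⟩).isPWO

lemma ACC.partiallyWellOrderedOn_ge {S : Set ℝ} (h : ACC S) :
    S.PartiallyWellOrderedOn (· ≥ ·) :=
  (isWF_iff_no_descending_seq (α := ℝᵒᵈ) (s := S) |>.2 fun f hf hS => h ⟨f, hS, hf⟩).isPWO

lemma insert_zero_Iplus_subset_closure (I : Set ℝ) :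
    insert 0 (Iplus I) ⊆ AddSubmonoid.closure I := by
  rintro _ (rfl | ⟨l, -, hl, rfl, -⟩)
  · exact zero_mem _
  · exact AddSubmonoid.list_sum_mem _ fun x hx => AddSubmonoid.subset_closure (hl x hx)

lemma nonneg_of_mem_closure {I : Set ℝ} (hI : ∀ x ∈ I, 0 ≤ x) {f : ℝ}
    (hf : f ∈ AddSubmonoid.closure I) : 0 ≤ f :=
  AddSubmonoid.closure_induction hI le_rfl (fun _ _ _ _ => add_nonneg) hf

/-- A witness that `c` lies in the set of the theorem, the summands being listed as triples
`(mᵢ, fᵢ, kᵢ)` and the `fᵢ` only required to be sums of elements of `I`. -/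
structure IsThresholdRep (I K : Set ℝ) (c a κ : ℝ) (l : List (ℕ × ℝ × ℕ)) : Prop where
  mem_insert : a ∈ insert 0 I
  mem_right : κ ∈ K
  pos_of_mem : ∀ x ∈ l, 0 < x.1
  mem_closure_of_mem : ∀ x ∈ l, x.2.1 ∈ AddSubmonoid.closure I
  summand_le_one : ∀ x ∈ l, summand c x ≤ 1
  exists_pos : ∃ x ∈ l, 0 < x.2.2
  sum_eq : a + (l.map (summand c)).sum = κ

lemma isThresholdRep_ofFn {I K : Set ℝ} {c a κ : ℝ} {p : ℕ} {m k : Fin p → ℕ} {f : Fin p → ℝ}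
    (hm : ∀ i, 0 < m i) (hk : ∃ i, 0 < k i) (ha : a ∈ insert 0 I)
    (hf : ∀ i, f i ∈ insert 0 (Iplus I)) (hκ : κ ∈ K)
    (hsum : a + ∑ i, summand c (m i, f i, k i) = κ) (hle : ∀ i, summand c (m i, f i, k i) ≤ 1) :
    IsThresholdRep I K c a κ (List.ofFn fun i => (m i, f i, k i)) where
  mem_insert := ha
  mem_right := hκ
  pos_of_mem := List.forall_mem_ofFn_iff.2 hm
  mem_closure_of_mem :=
    List.forall_mem_ofFn_iff.2 fun i => insert_zero_Iplus_subset_closure I (hf i)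
  summand_le_one := List.forall_mem_ofFn_iff.2 hle
  exists_pos := by
    obtain ⟨i, hi⟩ := hk
    exact ⟨_, List.mem_ofFn.2 ⟨i, rfl⟩, hi⟩
  sum_eq := by rwa [List.map_ofFn, List.sum_ofFn]

def thresholdData (I K : Set ℝ) : Set (ℝ × ℝ × List (ℕ × ℝ × ℕ)) :=
  insert 0 I ×ˢ K ×ˢ {l | ∀ x ∈ l, x ∈ (univ : Set ℕ) ×ˢ (AddSubmonoid.closure I : Set ℝ) ×ˢ univ}

namespace IsThresholdRep

variable {I K : Set ℝ} {c a κ : ℝ} {l : List (ℕ × ℝ × ℕ)}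

lemma mem (h : IsThresholdRep I K c a κ l) :
    (a, κ, l) ∈ thresholdData I K :=
  ⟨h.mem_insert, h.mem_right, fun x hx => ⟨trivial, h.mem_closure_of_mem x hx, trivial⟩⟩

/-- The summands of the first representation are dominated by distinct summands of the second,
the remaining ones are nonnegative, and domination is strict for a summand with `k > 0`. -/
lemma lt_of_sublistForall₂ {c' a' κ' : ℝ} {l' : List (ℕ × ℝ × ℕ)} (hI : ∀ x ∈ I, 0 ≤ x)
    (h : IsThresholdRep I K c a κ l) (h' : IsThresholdRep I K c' a' κ' l')
    (hc : 0 ≤ c) (hcc : c < c') (ha : a ≤ a') (hl : List.SublistForall₂ (· ≤ ·) l l') :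
    κ < κ' := by
  have hsum : (l.map (summand c)).sum < (l'.map (summand c')).sum := by
    refine hl.sum_map_lt_sum_map
      (fun x hx y hy hxy => summand_le_summand hxy (h.pos_of_mem x hx) hc hcc.le
        (h'.summand_le_one y hy))
      (fun y hy => summand_nonneg (h'.pos_of_mem y hy)
        (nonneg_of_mem_closure hI (h'.mem_closure_of_mem y hy)) (hc.trans hcc.le)) ?_
    obtain ⟨x, hx, hk⟩ := h.exists_pos
    exact ⟨x, hx, fun y hy hxy => summand_lt_summand hxy (h.pos_of_mem x hx) hk hc hcc
      (h'.summand_le_one y hy)⟩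
  linarith [h.sum_eq, h'.sum_eq]

end IsThresholdRep

lemma partiallyWellOrderedOn_thresholdData {I K : Set ℝ} (hI : ∀ x ∈ I, 0 ≤ x)
    (hIdcc : DCC I) (hKacc : ACC K) :
    (thresholdData I K).PartiallyWellOrderedOn fun r r' =>
      r.1 ≤ r'.1 ∧ r.2.1 ≥ r'.2.1 ∧ List.SublistForall₂ (· ≤ ·) r.2.2 r'.2.2 :=
  PartiallyWellOrderedOn.prod (hIdcc.isPWO.insert 0) <| hKacc.partiallyWellOrderedOn_ge.prod <|
    PartiallyWellOrderedOn.partiallyWellOrderedOn_sublistForall₂ _ <|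
      (IsPWO.of_linearOrder univ).prod <|
        (hIdcc.isPWO.addSubmonoid_closure hI).prod (IsPWO.of_linearOrder univ)

theorem acc_of_thresholds_general (I K : Set ℝ) (hIpos : ∀ x ∈ I, 0 < x)
    (hIdcc : DCC I) (hKacc : ACC K) :
    ACC {c : ℝ | c ∈ Set.Ioc 0 1 ∧ ∃ p : ℕ, 0 < p ∧ ∃ m k : Fin p → ℕ,
      (∀ i, 0 < m i) ∧ (∃ i, 0 < k i) ∧
      ∃ a ∈ insert (0 : ℝ) I, ∃ f : Fin p → ℝ,
        (∀ i, f i ∈ insert (0 : ℝ) (Iplus I)) ∧ ∃ κ ∈ K,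
          a + ∑ i, (((m i : ℝ) - 1) / (m i) + f i / (m i) + (k i : ℝ) * c / (m i)) = κ ∧
          ∀ i, ((m i : ℝ) - 1) / (m i) + f i / (m i) + (k i : ℝ) * c / (m i) ≤ 1} := by
  rintro ⟨c, hc, hc_mono⟩
  have hrep : ∀ n, ∃ a κ l, IsThresholdRep I K (c n) a κ l := fun n => by
    obtain ⟨-, p, -, m, k, hm, hk, a, ha, f, hf, κ, hκ, hsum, hle⟩ := hc n
    exact ⟨a, κ, _, isThresholdRep_ofFn hm hk ha hf hκ hsum hle⟩
  choose a κ l hrep using hrep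
  have hI : ∀ x ∈ I, 0 ≤ x := fun x hx => (hIpos x hx).le
  obtain ⟨n, n', hnn', ha, hκ, hl⟩ :=
    (partiallyWellOrderedOn_thresholdData hI hIdcc hKacc).exists_lt
      (f := fun n => (a n, κ n, l n)) fun n => (hrep n).mem
  exact hκ.not_gt <|
    (hrep n).lt_of_sublistForall₂ hI (hrep n') (hc n).1.1.le (hc_mono hnn') ha hl

/-- Lemma 4.5 (single-variable version): if `I ⊆ ℝ_{>0}` is bounded and
satisfies DCC and `K ⊆ ℝ` is bounded and satisfies ACC, then the set of
`c ∈ (0,1]` admitting a representation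
`a + ∑ᵢ ((mᵢ-1)/mᵢ + fᵢ/mᵢ + kᵢ c/mᵢ) = k ∈ K` with each summand at most
one satisfies ACC. -/
theorem acc_of_thresholds (I K : Set ℝ) (hIpos : ∀ x ∈ I, 0 < x)
    (hIbdd : Bornology.IsBounded I) (hKbdd : Bornology.IsBounded K)
    (hIdcc : DCC I) (hKacc : ACC K) :
    ACC {c : ℝ | c ∈ Set.Ioc 0 1 ∧ ∃ p : ℕ, 0 < p ∧ ∃ m k : Fin p → ℕ,
      (∀ i, 0 < m i) ∧ (∃ i, 0 < k i) ∧
      ∃ a ∈ insert (0 : ℝ) I, ∃ f : Fin p → ℝ,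
        (∀ i, f i ∈ insert (0 : ℝ) (Iplus I)) ∧ ∃ κ ∈ K,
          a + ∑ i, (((m i : ℝ) - 1) / (m i) + f i / (m i) + (k i : ℝ) * c / (m i)) = κ ∧
          ∀ i, ((m i : ℝ) - 1) / (m i) + f i / (m i) + (k i : ℝ) * c / (m i) ≤ 1} :=
  acc_of_thresholds_general I K hIpos hIdcc hKacc
end

section
/- Every element $a$ of $N_1$ with $a \neq 1$ satisfies $a \leq 5/6$. Here $a \in N_1$ means there exist positive integers $m_1,\ldots,m_r$ and nonnegative integers $k_1,\ldots,k_r$ with $\sum k_i \geq 1$, such that $\sum_{i=1}^r \left(\frac{m_i-1}{m_i} + \frac{k_i a}{m_i}\right) = 2$ and each term $\frac{m_i-1}{m_i} + \frac{k_i a}{m_i} \leq 1$. -/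
/-!
For `2/3 ≤ a ≤ 1` the bound `(m-1)/m + k a/m ≤ 1` forces `k ≤ 1`, so every term is `0`, `1/2`,
or lies in `[2/3, 1]`; and `{0, 1/2} ∪ [2/3, 1] ∪ [7/6, ∞)` is closed under addition. A term with
`k = 1` lies in `[a, 1)`. If `5/6 < a < 1`, the other terms would sum to `2` minus such a term,
a number in `(1, 7/6)`, which that set omits.
-/

/-- The set `N₁`: `mᵢ ≥ 1`, `kᵢ ≥ 0` with at least one `kᵢ` positive,
each term `(mᵢ-1)/mᵢ + kᵢ a/mᵢ ≤ 1`, and the terms sum to `2`. -/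
def None' : Set ℝ :=
  {a | a ∈ Set.Ioc 0 1 ∧ ∃ r : ℕ, 0 < r ∧ ∃ m k : Fin r → ℕ,
    (∀ i, 0 < m i) ∧ (∃ i, 0 < k i) ∧
    (∑ i, (((m i : ℝ) - 1) / (m i) + (k i : ℝ) * a / (m i)) = 2) ∧
    (∀ i, ((m i : ℝ) - 1) / (m i) + (k i : ℝ) * a / (m i) ≤ 1)}

open Set

def gapSubmonoid : AddSubmonoid ℝ where
  carrier := {0, 1 / 2} ∪ Icc (2 / 3) 1 ∪ Ici (7 / 6)
  zero_mem' := by simp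
  add_mem' := by
    simp only [mem_union, mem_insert_iff, mem_singleton_iff, mem_Icc, mem_Ici]
    rintro x y (((rfl | rfl) | ⟨hx, hx'⟩) | hx) (((rfl | rfl) | ⟨hy, hy'⟩) | hy) <;>
      first
      | (norm_num; done)
      | (right; linarith)
      | (left; right; constructor <;> linarith)

theorem mem_gapSubmonoid {x : ℝ} :
    x ∈ gapSubmonoid ↔ x ∈ ({0, 1 / 2} ∪ Icc (2 / 3) 1 ∪ Ici (7 / 6) : Set ℝ) :=
  Iff.rfl

theorem notMem_gapSubmonoid_of_mem_Ioo {x : ℝ} (hx : x ∈ Ioo 1 (7 / 6)) : x ∉ gapSubmonoid := by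
  obtain ⟨hx, hx'⟩ := hx
  simp only [mem_gapSubmonoid, mem_union, mem_insert_iff, mem_singleton_iff, mem_Icc, mem_Ici,
    not_or, not_and, not_le]
  refine ⟨⟨⟨?_, ?_⟩, fun _ => hx⟩, hx'⟩ <;> linarith

noncomputable def n1Term (a : ℝ) (m k : ℕ) : ℝ := ((m : ℝ) - 1) / m + (k : ℝ) * a / m

section n1Term

variable {a : ℝ} {m k : ℕ}

theorem n1Term_eq_one_sub (hm : 0 < m) : n1Term a m k = 1 - (1 - k * a) / m := by
  have : (m : ℝ) ≠ 0 := by positivity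
  unfold n1Term
  field_simp
  ring

theorem natCast_mul_le_one_of_n1Term_le_one (hm : 0 < m) (h : n1Term a m k ≤ 1) :
    (k : ℝ) * a ≤ 1 := by
  have hm' : (0 : ℝ) < m := by exact_mod_cast hm
  rw [n1Term_eq_one_sub hm, sub_le_self_iff, div_nonneg_iff] at h
  rcases h with ⟨h, -⟩ | ⟨-, h⟩ <;> linarith

theorem le_one_of_n1Term_le_one (ha : 1 / 2 < a) (hm : 0 < m) (h : n1Term a m k ≤ 1) :
    k ≤ 1 := by
  have hka := natCast_mul_le_one_of_n1Term_le_one hm h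
  by_contra! hk
  have : (2 : ℝ) ≤ k := by exact_mod_cast hk
  nlinarith

theorem n1Term_one_mem_Icc (ha : a ≤ 1) (hm : 0 < m) : n1Term a m 1 ∈ Icc a 1 := by
  have hm' : (1 : ℝ) ≤ m := by exact_mod_cast hm
  rw [n1Term_eq_one_sub hm, Nat.cast_one, one_mul]
  constructor
  · rw [le_sub_comm, div_le_iff₀ (by positivity)]
    nlinarith
  · have : 0 ≤ (1 - a) / m := by apply div_nonneg <;> linarith
    linarith

theorem n1Term_one_lt_one (ha : a < 1) (hm : 0 < m) : n1Term a m 1 < 1 := by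
  rw [n1Term_eq_one_sub hm, Nat.cast_one, one_mul, sub_lt_self_iff]
  apply div_pos <;> simp [ha, hm]


theorem n1Term_zero_mem_gapSubmonoid (hm : 0 < m) : n1Term a m 0 ∈ gapSubmonoid := by
  rw [mem_gapSubmonoid, n1Term_eq_one_sub hm, Nat.cast_zero, zero_mul, sub_zero]
  obtain rfl | rfl | hm3 : m = 1 ∨ m = 2 ∨ 3 ≤ m := by omega
  · norm_num
  · norm_num
  · have : (3 : ℝ) ≤ m := by exact_mod_cast hm3
    refine Or.inl (Or.inr ⟨?_, ?_⟩)
    · rw [le_sub_comm, div_le_iff₀ (by positivity)]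
      linarith
    · have : 0 ≤ 1 / (m : ℝ) := by positivity
      linarith

theorem n1Term_mem_gapSubmonoid (ha : a ∈ Icc (2 / 3) 1) (hm : 0 < m)
    (h : n1Term a m k ≤ 1) : n1Term a m k ∈ gapSubmonoid := by
  obtain ⟨ha, ha'⟩ := ha
  have hk := le_one_of_n1Term_le_one (by linarith) hm h
  interval_cases k
  · exact n1Term_zero_mem_gapSubmonoid hm
  · have := n1Term_one_mem_Icc ha' hm
    exact mem_gapSubmonoid.2 (Or.inl (Or.inr ⟨this.1.trans' ha, this.2⟩))

end n1Term

/-- Every element of `N₁` other than `1` is at most `5/6`. -/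
theorem N1_le_five_sixths (a : ℝ) (ha : a ∈ None') (hne : a ≠ 1) :
    a ≤ 5 / 6 := by
  obtain ⟨⟨-, ha1⟩, r, -, m, k, hm, ⟨i₀, hk₀_pos⟩, hsum, hle⟩ := ha
  change ∀ i, n1Term a (m i) (k i) ≤ 1 at hle
  change ∑ i, n1Term a (m i) (k i) = 2 at hsum
  by_contra! h56
  have hk₀ : k i₀ = 1 := (le_one_of_n1Term_le_one (by linarith) (hm i₀) (hle i₀)).antisymm hk₀_pos
  have hlow : a ≤ n1Term a (m i₀) (k i₀) := hk₀ ▸ (n1Term_one_mem_Icc ha1 (hm i₀)).1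
  have hhigh : n1Term a (m i₀) (k i₀) < 1 := hk₀ ▸ n1Term_one_lt_one (ha1.lt_of_ne hne) (hm i₀)
  have hrest : ∑ i ∈ Finset.univ.erase i₀, n1Term a (m i) (k i) ∈ gapSubmonoid :=
    sum_mem fun i _ => n1Term_mem_gapSubmonoid ⟨by linarith, ha1⟩ (hm i) (hle i)
  have hsplit := Finset.add_sum_erase _ (fun i => n1Term a (m i) (k i)) (Finset.mem_univ i₀)
  refine notMem_gapSubmonoid_of_mem_Ioo ?_ hrest
  constructor <;> linarith
end
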